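/- Let p ∈ (1,2) and let f(1),…,f(n) be positive definite matrices in M_m(ℂ), with E(f) = (1/n)∑_{i=1}^n f(i). Then (1/n)∑_{i=1}^n tr(f(i)^p) − tr(E(f)^p) ≤ (1/(2n²)) ∑_{i,j=1}^n tr[(f(i) − f(j))(f(i)^{p−1} − f(j)^{p−1})]. -/

import Mathlib

open Matrix
open scoped ComplexOrder

/-- Matrix power `A^q` (real exponent) via the continuous functional calculus. -/
noncomputable def mpow {m : ℕ} (A : Matrix (Fin m) (Fin m) ℂ) (q : ℝ) :
    Matrix (Fin m) (Fin m) ℂ :=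
  cfc (fun x : ℝ => x ^ q) A

/-!
Expanding the product, the right-hand side equals `(1/n) ∑ᵢ tr fᵢ^p - tr (E G)` with
`E = (1/n) ∑ᵢ fᵢ` and `G = (1/n) ∑ⱼ fⱼ^(p-1)`, while `tr E^p = tr (E E^(p-1))`; so it suffices to
show `tr (E G) ≤ tr (E E^(p-1))`. If `(uₖ)` is an orthonormal eigenbasis of `E` with eigenvalues
`eₖ ≥ 0`, both traces are `∑ₖ eₖ ⟨uₖ, X uₖ⟩`, and `⟨uₖ, G uₖ⟩ ≤ eₖ^(p-1)` by Jensen's inequality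
for the concave map `x ↦ x^(p-1)`, applied twice: to the spectral measure of each `fⱼ` in the
state `uₖ`, and then to the average over `j`.
-/

open scoped InnerProductSpace

theorem Finset.sum_sum_smul_sub_mul_sub {K R ι : Type*} [CommRing K] [Ring R] [Algebra K R]
    (s : Finset ι) (w : ι → K) (hw : ∑ i ∈ s, w i = 1) (a b : ι → R) :
    ∑ i ∈ s, ∑ j ∈ s, (w i * w j) • ((a i - a j) * (b i - b j)) =
      (2 : K) • (∑ i ∈ s, w i • (a i * b i) - (∑ i ∈ s, w i • a i) * ∑ i ∈ s, w i • b i) := by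
  have hdiag (c : ι → R) : ∑ i ∈ s, ∑ j ∈ s, (w i * w j) • c i = ∑ i ∈ s, w i • c i := by
    simp only [← Finset.sum_smul, ← Finset.mul_sum, hw, mul_one]
  have hdiag' (c : ι → R) : ∑ i ∈ s, ∑ j ∈ s, (w i * w j) • c j = ∑ i ∈ s, w i • c i := by
    rw [Finset.sum_comm, ← hdiag c]
    simp only [mul_comm]
  have hcross : ∑ i ∈ s, ∑ j ∈ s, (w i * w j) • (a i * b j) =
      (∑ i ∈ s, w i • a i) * ∑ i ∈ s, w i • b i := by
    simp only [Finset.sum_mul_sum, smul_mul_smul_comm]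
  have hcross' : ∑ i ∈ s, ∑ j ∈ s, (w i * w j) • (a j * b i) =
      (∑ i ∈ s, w i • a i) * ∑ i ∈ s, w i • b i := by
    rw [Finset.sum_comm, ← hcross]
    simp only [mul_comm]
  have hexpand (i j : ι) :
      (a i - a j) * (b i - b j) = a i * b i + a j * b j - a i * b j - a j * b i := by
    noncomm_ring
  simp only [hexpand, smul_sub, smul_add, Finset.sum_sub_distrib, Finset.sum_add_distrib, hdiag,
    hdiag' fun i => a i * b i, hcross, hcross']
  rw [two_smul, two_smul]
  abel

namespace Matrix.IsHermitian

variable {𝕜 ι : Type*} [RCLike 𝕜] [Fintype ι] [DecidableEq ι] {A : Matrix ι ι 𝕜}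
  (hA : A.IsHermitian)
include hA

lemma cfc_mulVec_eigenvectorBasis (g : ℝ → ℝ) (j : ι) :
    cfc g A *ᵥ ⇑(hA.eigenvectorBasis j) =
      (g (hA.eigenvalues j) : 𝕜) • ⇑(hA.eigenvectorBasis j) := by
  rw [hA.cfc_eq, IsHermitian.cfc, Unitary.conjStarAlgAut_apply, ← mulVec_mulVec, ← mulVec_mulVec,
    star_eigenvectorUnitary_mulVec, diagonal_mulVec_single, ← eigenvectorUnitary_mulVec hA,
    ← mulVec_smul, ← Pi.single_smul, smul_eq_mul, Function.comp_apply, Function.comp_apply,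
    mul_one]

lemma re_star_dotProduct_cfc_mulVec (g : ℝ → ℝ) (v : EuclideanSpace 𝕜 ι) :
    RCLike.re (star ⇑v ⬝ᵥ (cfc g A *ᵥ ⇑v)) =
      ∑ l, ‖⟪hA.eigenvectorBasis l, v⟫_𝕜‖ ^ 2 * g (hA.eigenvalues l) := by
  have hv : ⇑v = ∑ l, ⟪hA.eigenvectorBasis l, v⟫_𝕜 • ⇑(hA.eigenvectorBasis l) := by
    conv_lhs => rw [← hA.eigenvectorBasis.sum_repr' v]
    simp
  have hterm (l : ι) :
      star ⇑v ⬝ᵥ ⇑(hA.eigenvectorBasis l) = star ⟪hA.eigenvectorBasis l, v⟫_𝕜 := by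
    rw [dotProduct_comm, ← EuclideanSpace.inner_eq_star_dotProduct, ← inner_conj_symm]
    rfl
  have hmul : cfc g A *ᵥ ⇑v =
      ∑ l, (⟪hA.eigenvectorBasis l, v⟫_𝕜 * g (hA.eigenvalues l)) • ⇑(hA.eigenvectorBasis l) := by
    simp only [hv, mulVec_sum, mulVec_smul, hA.cfc_mulVec_eigenvectorBasis, smul_smul]
  simp only [hmul, dotProduct_sum, dotProduct_smul, hterm, map_sum, smul_eq_mul]
  refine Finset.sum_congr rfl fun l _ => ?_
  rw [RCLike.star_def, mul_right_comm, RCLike.mul_conj, ← RCLike.ofReal_pow, ← RCLike.ofReal_mul,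
    RCLike.ofReal_re]

lemma re_star_dotProduct_mulVec (v : EuclideanSpace 𝕜 ι) :
    RCLike.re (star ⇑v ⬝ᵥ (A *ᵥ ⇑v)) =
      ∑ l, ‖⟪hA.eigenvectorBasis l, v⟫_𝕜‖ ^ 2 * hA.eigenvalues l := by
  simpa only [cfc_id ℝ A, id_eq] using hA.re_star_dotProduct_cfc_mulVec id v

lemma re_star_dotProduct_cfc_mulVec_eigenvectorBasis (g : ℝ → ℝ) (k : ι) :
    RCLike.re (star ⇑(hA.eigenvectorBasis k) ⬝ᵥ (cfc g A *ᵥ ⇑(hA.eigenvectorBasis k))) =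
      g (hA.eigenvalues k) := by
  rw [hA.re_star_dotProduct_cfc_mulVec]
  simp [orthonormal_iff_ite.mp hA.eigenvectorBasis.orthonormal, apply_ite]

variable {s : Set ℝ} (hs : spectrum ℝ A ⊆ s) {v : EuclideanSpace 𝕜 ι} (hv : ‖v‖ = 1)
include hs hv

lemma re_star_dotProduct_mulVec_mem (hsc : Convex ℝ s) :
    RCLike.re (star ⇑v ⬝ᵥ (A *ᵥ ⇑v)) ∈ s := by
  rw [hA.re_star_dotProduct_mulVec]
  refine hsc.sum_mem (fun _ _ => by positivity) ?_
    fun l _ => hs (hA.eigenvalues_mem_spectrum_real l)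
  rw [hA.eigenvectorBasis.sum_sq_norm_inner_right, hv, one_pow]

theorem re_star_dotProduct_cfc_mulVec_le {g : ℝ → ℝ} (hg : ConcaveOn ℝ s g) :
    RCLike.re (star ⇑v ⬝ᵥ (cfc g A *ᵥ ⇑v)) ≤ g (RCLike.re (star ⇑v ⬝ᵥ (A *ᵥ ⇑v))) := by
  rw [hA.re_star_dotProduct_cfc_mulVec, hA.re_star_dotProduct_mulVec]
  simpa only [smul_eq_mul] using hg.le_map_sum (fun _ _ => by positivity)
    (by rw [hA.eigenvectorBasis.sum_sq_norm_inner_right, hv, one_pow])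
    fun l _ => hs (hA.eigenvalues_mem_spectrum_real l)

end Matrix.IsHermitian

namespace Matrix

variable {𝕜 ι κ : Type*} [RCLike 𝕜] [Fintype ι] [DecidableEq ι]

theorem trace_eq_sum_star_dotProduct_mulVec [Fintype κ] (M : Matrix ι ι 𝕜)
    (b : OrthonormalBasis κ 𝕜 (EuclideanSpace 𝕜 ι)) :
    M.trace = ∑ k, star ⇑(b k) ⬝ᵥ (M *ᵥ ⇑(b k)) := by
  rw [← trace_toLin_eq M (PiLp.basisFun 2 𝕜 ι), ← toLpLin_eq_toLin,
    LinearMap.trace_eq_sum_inner _ b]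
  exact Fintype.sum_congr _ _ fun k => dotProduct_comm _ _

theorem IsHermitian.trace_mul_eq_sum {A : Matrix ι ι 𝕜} (hA : A.IsHermitian) (M : Matrix ι ι 𝕜) :
    (M * A).trace = ∑ k, (hA.eigenvalues k : 𝕜) *
      (star ⇑(hA.eigenvectorBasis k) ⬝ᵥ (M *ᵥ ⇑(hA.eigenvectorBasis k))) := by
  rw [trace_eq_sum_star_dotProduct_mulVec _ hA.eigenvectorBasis]
  refine Fintype.sum_congr _ _ fun k => ?_
  rw [← mulVec_mulVec, hA.mulVec_eigenvectorBasis, RCLike.real_smul_eq_coe_smul (K := 𝕜),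
    mulVec_smul, dotProduct_smul, smul_eq_mul]

theorem re_star_dotProduct_sum_cfc_mulVec_le {s : Set ℝ} {g : ℝ → ℝ} (hg : ConcaveOn ℝ s g)
    (t : Finset κ) (w : κ → ℝ) (hw₀ : ∀ j ∈ t, 0 ≤ w j) (hw₁ : ∑ j ∈ t, w j = 1)
    (f : κ → Matrix ι ι 𝕜) (hf : ∀ j ∈ t, (f j).IsHermitian) (hs : ∀ j ∈ t, spectrum ℝ (f j) ⊆ s)
    {v : EuclideanSpace 𝕜 ι} (hv : ‖v‖ = 1) :
    RCLike.re (star ⇑v ⬝ᵥ ((∑ j ∈ t, w j • cfc g (f j)) *ᵥ ⇑v)) ≤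
      g (RCLike.re (star ⇑v ⬝ᵥ ((∑ j ∈ t, w j • f j) *ᵥ ⇑v))) := by
  have hlin (M : κ → Matrix ι ι 𝕜) : RCLike.re (star ⇑v ⬝ᵥ ((∑ j ∈ t, w j • M j) *ᵥ ⇑v)) =
      ∑ j ∈ t, w j * RCLike.re (star ⇑v ⬝ᵥ (M j *ᵥ ⇑v)) := by
    simp only [sum_mulVec, smul_mulVec, dotProduct_sum, dotProduct_smul, map_sum, RCLike.smul_re]
  rw [hlin, hlin]
  calc ∑ j ∈ t, w j * RCLike.re (star ⇑v ⬝ᵥ (cfc g (f j) *ᵥ ⇑v))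
      ≤ ∑ j ∈ t, w j * g (RCLike.re (star ⇑v ⬝ᵥ (f j *ᵥ ⇑v))) := by
        gcongr with j hj
        · exact hw₀ j hj
        · exact (hf j hj).re_star_dotProduct_cfc_mulVec_le (hs j hj) hv hg
    _ ≤ g (∑ j ∈ t, w j * RCLike.re (star ⇑v ⬝ᵥ (f j *ᵥ ⇑v))) := by
        simpa only [smul_eq_mul] using hg.le_map_sum hw₀ hw₁
          fun j hj => (hf j hj).re_star_dotProduct_mulVec_mem (hs j hj) hv hg.1

theorem PosSemidef.spectrum_real_subset_Ici {A : Matrix ι ι 𝕜} (hA : A.PosSemidef) :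
    spectrum ℝ A ⊆ Set.Ici 0 := by
  rw [hA.1.spectrum_real_eq_range_eigenvalues]
  rintro - ⟨l, rfl⟩
  exact hA.eigenvalues_nonneg l

theorem re_trace_mul_sum_cfc_le {g : ℝ → ℝ} (hg : ConcaveOn ℝ (Set.Ici 0) g)
    (t : Finset κ) (w : κ → ℝ) (hw₀ : ∀ j ∈ t, 0 ≤ w j) (hw₁ : ∑ j ∈ t, w j = 1)
    (f : κ → Matrix ι ι 𝕜) (hf : ∀ j ∈ t, (f j).PosSemidef) :
    RCLike.re ((∑ j ∈ t, w j • f j) * ∑ j ∈ t, w j • cfc g (f j)).trace ≤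
      RCLike.re ((∑ j ∈ t, w j • f j) * cfc g (∑ j ∈ t, w j • f j)).trace := by
  set E := ∑ j ∈ t, w j • f j
  have hE : E.PosSemidef := posSemidef_sum t fun j hj => (hf j hj).smul (hw₀ j hj)
  rw [trace_mul_comm E, trace_mul_comm E, hE.1.trace_mul_eq_sum, hE.1.trace_mul_eq_sum, map_sum,
    map_sum]
  refine Finset.sum_le_sum fun k _ => ?_
  rw [RCLike.re_ofReal_mul, RCLike.re_ofReal_mul,
    hE.1.re_star_dotProduct_cfc_mulVec_eigenvectorBasis]
  refine mul_le_mul_of_nonneg_left ?_ (hE.eigenvalues_nonneg k)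
  rw [hE.1.eigenvalues_eq k]
  exact re_star_dotProduct_sum_cfc_mulVec_le hg t w hw₀ hw₁ f (fun j hj => (hf j hj).1)
    (fun j hj => (hf j hj).spectrum_real_subset_Ici)
    (hE.1.eigenvectorBasis.orthonormal.1 k)

end Matrix

theorem mul_mpow_sub_one {m : ℕ} {B : Matrix (Fin m) (Fin m) ℂ} (hB : B.PosSemidef) {p : ℝ}
    (hp : p ≠ 0) : B * mpow B (p - 1) = mpow B p := by
  have hB' : IsSelfAdjoint B := hB.1
  calc B * mpow B (p - 1) = cfc (fun x : ℝ => x * x ^ (p - 1)) B := by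
        rw [mpow, cfc_mul _ _ B (continuousOn_id' _) (finite_real_spectrum.continuousOn _),
          cfc_id' ℝ B]
    _ = mpow B p := cfc_congr fun x hx => ?_
  rw [← Real.rpow_one_add' (hB.spectrum_real_subset_Ici hx) (by simpa using hp), add_sub_cancel]

/-- matrix-valued Beckner inequality for the uniform averaging operator: for
`p ∈ (1,2)` and positive definite `f(1),…,f(n)` with average `E(f)`,
`(1/n)∑ᵢ tr(f(i)^p) − tr(E(f)^p) ≤ (1/(2n²)) ∑_{i,j} tr[(f(i)−f(j))(f(i)^{p−1}−f(j)^{p−1})]`. -/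
theorem matrix_beckner_uniform_average {m n : ℕ} (hn : 0 < n)
    (p : ℝ) (hp : p ∈ Set.Ioo (1 : ℝ) 2)
    (f : Fin n → Matrix (Fin m) (Fin m) ℂ) (hf : ∀ i, (f i).PosDef) :
    (1 / (n : ℝ)) * ∑ i, (Matrix.trace (mpow (f i) p)).re -
        (Matrix.trace (mpow (((1 / (n : ℝ)) : ℂ) • ∑ i, f i) p)).re ≤
      (1 / (2 * (n : ℝ) ^ 2)) * ∑ i, ∑ j,
        (Matrix.trace ((f i - f j) * (mpow (f i) (p - 1) - mpow (f j) (p - 1)))).re := by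
  obtain ⟨hp₁, hp₂⟩ := hp
  have hf' : ∀ i ∈ Finset.univ, (f i).PosSemidef := fun i _ => (hf i).posSemidef
  set w : Fin n → ℝ := fun _ => 1 / n
  have hw₁ : ∑ i, w i = 1 := by simp [w, hn.ne']
  have hE : ((1 / (n : ℝ)) : ℂ) • ∑ i, f i = ∑ i, w i • f i := by
    simp only [Finset.smul_sum, w, ← Complex.coe_smul]
    push_cast
    rfl
  have hjensen : ((∑ i, w i • f i) * ∑ i, w i • mpow (f i) (p - 1)).trace.re ≤
      (mpow (∑ i, w i • f i) p).trace.re := by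
    rw [← mul_mpow_sub_one (posSemidef_sum _ fun i hi => (hf' i hi).smul (by positivity))
      (by linarith)]
    exact re_trace_mul_sum_cfc_le (Real.concaveOn_rpow (by linarith) (by linarith))
      Finset.univ w (fun _ _ => by positivity) hw₁ f hf'
  have hmpow : ∀ i, f i * mpow (f i) (p - 1) = mpow (f i) p :=
    fun i => mul_mpow_sub_one (hf i).posSemidef (by linarith)
  have hcov := congrArg (fun M => (trace M).re)
    (Finset.sum_sum_smul_sub_mul_sub Finset.univ w hw₁ f fun i => mpow (f i) (p - 1))
  simp only [trace_sum, trace_smul, trace_sub, Complex.re_sum, Complex.smul_re, Complex.sub_re,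
    smul_eq_mul, w, ← Finset.mul_sum, hmpow] at hcov
  rw [hE, show 1 / (2 * (n : ℝ) ^ 2) = 1 / 2 * (1 / n * (1 / n)) by field_simp, mul_assoc, hcov]
  linarith
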